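/- Let u_0 ∈ S_n be defined by u_0(i)=n+1−i for i≤k and u_0(i)=i−k for k<i≤n. Then for every v ∈ S_n, c_{u_0,v}^{id}(t,y) = ∏_{i=1}^{k} ∏_{j=1}^{n−i} (t_i ⊖ y_j) if v = id, and c_{u_0,v}^{id}(t,y) = 0 otherwise. -/

import Mathlib

open MvPolynomial

noncomputable section

namespace BPDPuzzle

/-- `x ⊖ y = (x - y)/(1 + β·y)`. -/
def ominus {K : Type*} [Field K] (β a b : K) : K := (a - b) / (1 + β * b)

/-- A permutation of `ℕ` lying in `S_∞`, i.e. fixing all sufficiently large integers. -/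
def FinPerm (w : Equiv.Perm ℕ) : Prop := ∃ N : ℕ, ∀ j, N ≤ j → w j = j

/-- A permutation of `ℕ` lying in `S_n` (0-based positions `0, …, n-1`). -/
def InSn (n : ℕ) (w : Equiv.Perm ℕ) : Prop := ∀ j, n ≤ j → w j = j

/-- Coxeter length: the number of inversions. -/
def len (w : Equiv.Perm ℕ) : ℕ := Set.ncard {p : ℕ × ℕ | p.1 < p.2 ∧ w p.2 < w p.1}

/-- The simple transposition `s_i`, exchanging the (0-based) positions `i` and `i+1`. -/
def sTr (i : ℕ) : Equiv.Perm ℕ := Equiv.swap i (i + 1)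

/-- `u` and `v` have separated descents at position `k`, i.e.
`maxdes(u) ≤ k ≤ mindes(v)` (in 0-based conventions: `u` has no descent at any
0-based position `≥ k` and `v` has no descent at any 0-based position `< k-1`). -/
def SepDesc (k : ℕ) (u v : Equiv.Perm ℕ) : Prop :=
  (∀ i, k ≤ i → u i ≤ u (i + 1)) ∧ (∀ i, i + 1 < k → v i ≤ v (i + 1))

/-- The longest element `n ⋯ 2 1` of `S_n`, extended by the identity. -/
def revPerm (n : ℕ) : Equiv.Perm ℕ where
  toFun j := if j < n then n - 1 - j else j
  invFun j := if j < n then n - 1 - j else j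
  left_inv j := by dsimp only; split_ifs <;> omega
  right_inv j := by dsimp only; split_ifs <;> omega

/-- Exchange the values of a valuation at the indices `i` and `i+1`. -/
def swapVal {K : Type*} (t : ℕ → K) (i : ℕ) : ℕ → K :=
  fun j => if j = i then t (i + 1) else if j = i + 1 then t i else t j

/-- The defining properties of the family of double Grothendieck polynomials
`𝔊_w(x, t)`, viewed as a family of polynomials in the `x`-variables depending on
a valuation `t` of the second set of variables:  the initial condition
`𝔊_{n⋯21}(x,t) = ∏_{i+j≤n} (x_i ⊖ t_j)` together with the Demazure recursion
`π_i 𝔊_w = 𝔊_{w s_i}` whenever `w(i) > w(i+1)` (the latter written with the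
denominator `x_i - x_{i+1}` cleared). -/
def GrothFamily {K : Type*} [Field K] (β : K)
    (G : (ℕ → K) → Equiv.Perm ℕ → MvPolynomial ℕ K) : Prop :=
  ∀ t : ℕ → K, (∀ j, 1 + β * t j ≠ 0) →
    (∀ n : ℕ, G t (revPerm n) =
      ∏ i ∈ Finset.range n, ∏ j ∈ Finset.range (n - 1 - i),
        C ((1 + β * t j)⁻¹) * (X i - C (t j))) ∧
    (∀ (w : Equiv.Perm ℕ) (i : ℕ), w (i + 1) < w i →
      (X i - X (i + 1)) * G t (w * sTr i) =
        (1 + C β * X (i + 1)) * G t w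
          - (1 + C β * X i) * rename ⇑(Equiv.swap i (i + 1)) (G t w))

/-- The defining property of the structure constants `c_{u,v}^w(t,y)`:
`𝔊_u(x,y) · 𝔊_v(x,t) = Σ_w c_{u,v}^w(t,y) · 𝔊_w(x,t)`, the (finitely supported)
sum ranging over the permutations `w ∈ S_∞`. -/
def StructConsts {K : Type*} [Field K] (β : K)
    (G : (ℕ → K) → Equiv.Perm ℕ → MvPolynomial ℕ K)
    (c : (ℕ → K) → (ℕ → K) → Equiv.Perm ℕ → Equiv.Perm ℕ → Equiv.Perm ℕ → K) : Prop :=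
  ∀ t y : ℕ → K, (∀ j, 1 + β * t j ≠ 0) → (∀ j, 1 + β * y j ≠ 0) →
    ∀ u v : Equiv.Perm ℕ, FinPerm u → FinPerm v →
      {w : Equiv.Perm ℕ | c t y u v w ≠ 0}.Finite ∧
      (∀ w, ¬ FinPerm w → c t y u v w = 0) ∧
      G y u * G t v = ∑ᶠ w : Equiv.Perm ℕ, C (c t y u v w) * G t w

/-! ### The lattice model / pipe puzzles -/

/-- A state of the `n × n` lattice model: labels in `{0, …, n}` on all horizontal
and vertical (half-)edges.  `sst.1 i j` is the `j`-th horizontal (half-)edge of row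
`i` (`j = 0` being the left boundary and `j = n` the right boundary), and
`sst.2 i j` is the `i`-th vertical (half-)edge of column `j` (`i = 0` the top
boundary, `i = n` the bottom boundary). -/
abbrev GridState (n : ℕ) : Type :=
  (Fin n → Fin (n + 1) → Fin (n + 1)) × (Fin (n + 1) → Fin n → Fin (n + 1))

/-- The label on the north edge of the tile in row `i`, column `j`. -/
def labN {n : ℕ} (sst : GridState n) (i j : Fin n) : ℕ := (sst.2 i.castSucc j : ℕ)
/-- The label on the east edge of the tile in row `i`, column `j`. -/
def labE {n : ℕ} (sst : GridState n) (i j : Fin n) : ℕ := (sst.1 i j.succ : ℕ)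
/-- The label on the west edge of the tile in row `i`, column `j`. -/
def labW {n : ℕ} (sst : GridState n) (i j : Fin n) : ℕ := (sst.1 i j.castSucc : ℕ)
/-- The label on the south edge of the tile in row `i`, column `j`. -/
def labS {n : ℕ} (sst : GridState n) (i j : Fin n) : ℕ := (sst.2 i.succ j : ℕ)

/-- Boundary label `κ_u` on the right side (0-based row `i`, 1-based pipe labels). -/
def kappaLab (k : ℕ) (u : Equiv.Perm ℕ) (i : ℕ) : ℕ :=
  if u⁻¹ i < k then u⁻¹ i + 1 else 0

/-- Boundary label `θ_v` on the top side (0-based column `j`, 1-based pipe labels). -/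
def thetaLab (k : ℕ) (v : Equiv.Perm ℕ) (j : ℕ) : ℕ :=
  if k ≤ v⁻¹ j then v⁻¹ j + 1 else 0

/-- Boundary label `η_w` on the bottom side (0-based column `j`, 1-based pipe labels). -/
def etaLab (w : Equiv.Perm ℕ) (j : ℕ) : ℕ := w⁻¹ j + 1

/-- The boundary condition for pipe puzzles for `(u, v, w)`: left edges all `0`,
right edges `κ_u`, top edges `θ_v`, bottom edges `η_w`. -/
def BoundaryCond (n k : ℕ) (u v w : Equiv.Perm ℕ) (sst : GridState n) : Prop :=
  (∀ i : Fin n, (sst.1 i 0 : ℕ) = 0) ∧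
  (∀ i : Fin n, (sst.1 i (Fin.last n) : ℕ) = kappaLab k u (i : ℕ)) ∧
  (∀ j : Fin n, (sst.2 0 j : ℕ) = thetaLab k v (j : ℕ)) ∧
  (∀ j : Fin n, (sst.2 (Fin.last n) j : ℕ) = etaLab w (j : ℕ))

/-- The admissible local configurations (tiles) of a pipe puzzle, in terms of the
four edge labels `N, E, W, S` around a tile:  the empty tile, the vertical pipe,
the horizontal pipe, the crossing (with the horizontal pipe carrying the smaller
label), the two elbows `⌟` and `⌐` (labels `≤ k` coming from the right side,
labels `> k` from the top side), and the bumping tiles (with the stated label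
restrictions). -/
def LAdm (k N E W S : ℕ) : Prop :=
  (N = 0 ∧ E = 0 ∧ W = 0 ∧ S = 0) ∨
  (E = 0 ∧ W = 0 ∧ 0 < N ∧ N = S) ∨
  (N = 0 ∧ S = 0 ∧ 0 < E ∧ E = W) ∨
  (0 < E ∧ E = W ∧ E < N ∧ N = S) ∨
  (E = 0 ∧ S = 0 ∧ 0 < N ∧ N = W ∧ N ≤ k) ∨
  (E = 0 ∧ S = 0 ∧ N = W ∧ k < N) ∨
  (N = 0 ∧ W = 0 ∧ 0 < E ∧ E = S ∧ E ≤ k) ∨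
  (N = 0 ∧ W = 0 ∧ E = S ∧ k < E) ∨
  (0 < E ∧ E = S ∧ E < N ∧ N = W ∧ N ≤ k) ∨
  (k < E ∧ E = S ∧ E < N ∧ N = W) ∨
  (0 < N ∧ N = W ∧ N ≤ k ∧ E = S ∧ k < E)

/-- The admissible local configurations of a Schubert pipe puzzle (no bumping
tiles; crossings have the horizontal pipe carrying the smaller label). -/
def LAdm0 (N E W S : ℕ) : Prop :=
  (N = 0 ∧ E = 0 ∧ W = 0 ∧ S = 0) ∨
  (E = 0 ∧ W = 0 ∧ 0 < N ∧ N = S) ∨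
  (N = 0 ∧ S = 0 ∧ 0 < E ∧ E = W) ∨
  (0 < E ∧ E = W ∧ E < N ∧ N = S) ∨
  (E = 0 ∧ S = 0 ∧ 0 < N ∧ N = W) ∨
  (N = 0 ∧ W = 0 ∧ 0 < E ∧ E = S)

/-- The vertex weight `L(x; N, E, W, S)` of the lattice model (equivalently, the
weight of the corresponding pipe-puzzle tile), with spectral parameter `x`. -/
def Lwt {K : Type*} [Field K] (β : K) (k : ℕ) (x : K) (N E W S : ℕ) : K :=
  if N = 0 ∧ E = 0 ∧ W = 0 ∧ S = 0 then x
  else if E = 0 ∧ W = 0 ∧ 0 < N ∧ N = S then 1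
  else if N = 0 ∧ S = 0 ∧ 0 < E ∧ E = W then 1
  else if 0 < E ∧ E = W ∧ E < N ∧ N = S then 1
  else if E = 0 ∧ S = 0 ∧ 0 < N ∧ N = W ∧ N ≤ k then 1 + β * x
  else if E = 0 ∧ S = 0 ∧ N = W ∧ k < N then 1
  else if N = 0 ∧ W = 0 ∧ 0 < E ∧ E = S ∧ E ≤ k then 1
  else if N = 0 ∧ W = 0 ∧ E = S ∧ k < E then 1 + β * x
  else if 0 < E ∧ E = S ∧ E < N ∧ N = W ∧ N ≤ k then β
  else if k < E ∧ E = S ∧ E < N ∧ N = W then β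
  else if 0 < N ∧ N = W ∧ N ≤ k ∧ E = S ∧ k < E then β * (1 + β * x)
  else 0

/-- The set of pipe puzzles for `(u, v, w)` (with separated-descent parameter `k`),
encoded as admissible states of the lattice model. -/
def PP (n k : ℕ) (u v w : Equiv.Perm ℕ) : Set (GridState n) :=
  {sst | BoundaryCond n k u v w sst ∧
    ∀ i j : Fin n, LAdm k (labN sst i j) (labE sst i j) (labW sst i j) (labS sst i j)}

/-- The set of Schubert pipe puzzles for `(u, v, w)`. -/
def PP0 (n k : ℕ) (u v w : Equiv.Perm ℕ) : Set (GridState n) :=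
  {sst | BoundaryCond n k u v w sst ∧
    ∀ i j : Fin n, LAdm0 (labN sst i j) (labE sst i j) (labW sst i j) (labS sst i j)}

/-- The weight `wt(π)` of a pipe puzzle: the product over all tiles, the tile in
row `i` and column `j` having spectral parameter `t_j ⊖ y_i`. -/
def stateWt {K : Type*} [Field K] (β : K) (k : ℕ) (t y : ℕ → K) {n : ℕ}
    (sst : GridState n) : K :=
  ∏ i : Fin n, ∏ j : Fin n,
    Lwt β k (ominus β (t (j : ℕ)) (y (i : ℕ)))
      (labN sst i j) (labE sst i j) (labW sst i j) (labS sst i j)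

/-- The Schubert weight `wt₀(π)`: the product of `t_j - y_i` over the positions
`(i, j)` of the empty tiles. -/
def stateWt0 {K : Type*} [Field K] (t y : ℕ → K) {n : ℕ} (sst : GridState n) : K :=
  ∏ i : Fin n, ∏ j : Fin n,
    if labN sst i j = 0 ∧ labE sst i j = 0 ∧ labW sst i j = 0 ∧ labS sst i j = 0
    then t (j : ℕ) - y (i : ℕ) else 1


/-!
Evaluate `𝔊_{u₀}(x, y) 𝔊_v(x, t) = Σ_w c_{u₀,v}^w 𝔊_w(x, t)` at `x = t`. Since `𝔊_1 = 1` and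
`𝔊_w(t, t) = 0` for `w ≠ 1`, this gives `c_{u₀,v}^{id} = 𝔊_{u₀}(t, y) 𝔊_v(t, t)`.

The vanishing is the case `σ = 1` of `𝔊_w(t_σ, t) = 0` whenever `σ` has fewer inversions than
`w`, proved by descending Demazure induction from `w₀`: at `x = t_σ` the product formula for
`𝔊_{w₀}` has a factor `t_{σ(i)} - t_j` with `j = σ(i)` unless `σ = w₀`. The induction has to run
for a generic alphabet `t`, because dividing by `x_i - x_{i+1}` at `x = t_σ` needs
`t_{σ(i)} ≠ t_{σ(i+1)}`.

Finally `u₀` is dominant: bubble sorting the last `n - k` entries of `w₀` into increasing order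
removes one box of the staircase diagram at a time, since `π_i (x_i ⊖ y_j) = 1` and `π_i` is
linear over polynomials symmetric in `x_i, x_{i+1}`; hence
`𝔊_{u₀}(x, y) = ∏_{i < k} ∏_{j < n-1-i} (x_i ⊖ y_j)`.
-/

lemma sTr_apply (i j : ℕ) : sTr i j = if j = i then i + 1 else if j = i + 1 then i else j := by
  simp [sTr, Equiv.swap_apply_def]

lemma mul_sTr_mul_sTr (w : Equiv.Perm ℕ) (i : ℕ) : w * sTr i * sTr i = w := by
  rw [mul_assoc, sTr, Equiv.swap_mul_self, mul_one]

lemma mul_sTr_apply_left (w : Equiv.Perm ℕ) (i : ℕ) : (w * sTr i) i = w (i + 1) := by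
  simp [sTr_apply]

lemma mul_sTr_apply_right (w : Equiv.Perm ℕ) (i : ℕ) : (w * sTr i) (i + 1) = w i := by
  simp [sTr_apply]

lemma revPerm_apply (n j : ℕ) : revPerm n j = if j < n then n - 1 - j else j := rfl

lemma revPerm_mul_self (n : ℕ) : revPerm n * revPerm n = 1 :=
  Equiv.ext fun j => (revPerm n).left_inv j

lemma InSn.mul_sTr {n i : ℕ} {w : Equiv.Perm ℕ} (hw : InSn n w) (hi : i + 1 < n) :
    InSn n (w * sTr i) := fun j hj => by
  rw [Equiv.Perm.mul_apply, sTr_apply, if_neg (by omega), if_neg (by omega), hw j hj]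

lemma eq_one_of_forall_le_apply {τ : Equiv.Perm ℕ} (h : ∀ j, j ≤ τ j) : τ = 1 := by
  refine Equiv.ext fun j => ?_
  induction j using Nat.strong_induction_on with
  | _ j ih =>
    -- `τ⁻¹ j ≤ τ (τ⁻¹ j) = j`, and `τ⁻¹ j < j` is impossible since `τ` fixes everything below `j`
    have hinv : τ⁻¹ j ≤ j := by simpa using h (τ⁻¹ j)
    rcases hinv.lt_or_eq with hlt | heq
    · have := ih _ hlt
      rw [Equiv.Perm.one_apply, show τ (τ⁻¹ j) = j from τ.apply_symm_apply j] at this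
      omega
    · simpa using congrArg τ heq.symm

lemma eq_revPerm_of_forall_le {n : ℕ} {σ : Equiv.Perm ℕ} (hσ : InSn n σ)
    (h : ∀ i < n, n - 1 - i ≤ σ i) : σ = revPerm n := by
  have hτ : σ * revPerm n = 1 := eq_one_of_forall_le_apply fun j => by
    rw [Equiv.Perm.mul_apply, revPerm_apply]
    split_ifs with hj
    · have := h (n - 1 - j) (by omega)
      omega
    · rw [hσ j (by omega)]
  calc σ = σ * revPerm n * revPerm n := by rw [mul_assoc, revPerm_mul_self, mul_one]
    _ = revPerm n := by rw [hτ, one_mul]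

lemma exists_ascent_of_ne_revPerm {n : ℕ} {w : Equiv.Perm ℕ} (hw : InSn n w)
    (hne : w ≠ revPerm n) : ∃ i, i + 1 < n ∧ w i < w (i + 1) := by
  by_contra! hdesc
  refine hne (eq_revPerm_of_forall_le hw fun i hi => ?_)
  induction h : n - 1 - i generalizing i with
  | zero => omega
  | succ d ih =>
    have hnext := ih (i + 1) (by omega) (by omega)
    have hle := hdesc i (by omega)
    have hne : w (i + 1) ≠ w i := fun heq => by simpa using w.injective heq
    omega

lemma exists_descent_of_ne_one {n : ℕ} {w : Equiv.Perm ℕ} (hw : InSn n w) (hne : w ≠ 1) :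
    ∃ i, i + 1 < n ∧ w (i + 1) < w i := by
  by_contra! hasc
  refine hne (eq_one_of_forall_le_apply fun j => ?_)
  induction j with
  | zero => omega
  | succ j ih =>
    by_cases hj : j + 1 < n
    · have hne : w (j + 1) ≠ w j := fun heq => by simpa using w.injective heq
      have := hasc j hj
      omega
    · rw [hw (j + 1) (by omega)]

open scoped Finset

def nonInv (n : ℕ) (w : Equiv.Perm ℕ) : ℕ :=
  #{p ∈ Finset.range n ×ˢ Finset.range n | p.1 < p.2 ∧ w p.1 < w p.2}

lemma nonInv_le_nonInv_one (n : ℕ) (w : Equiv.Perm ℕ) : nonInv n w ≤ nonInv n 1 :=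
  Finset.card_le_card <| Finset.monotone_filter_right _ fun _ _ hp => ⟨hp.1, hp.1⟩

lemma nonInv_eq_nonInv_mul_sTr_add_one {n i : ℕ} {w : Equiv.Perm ℕ} (hi : i + 1 < n)
    (hasc : w i < w (i + 1)) : nonInv n w = nonInv n (w * sTr i) + 1 := by
  set s := sTr i
  have hss : ∀ a, s (s a) = a := fun a => Equiv.swap_apply_self _ _ a
  have hs_lt : ∀ a, s a < n ↔ a < n := fun a => by
    simp only [s, sTr_apply]
    split_ifs <;> omega
  have reindex : nonInv n (w * s) =
      #{p ∈ Finset.range n ×ˢ Finset.range n | s p.1 < s p.2 ∧ w p.1 < w p.2} := by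
    refine Finset.card_nbij' (fun p => (s p.1, s p.2)) (fun p => (s p.1, s p.2))
      ?_ ?_ ?_ ?_ <;> intro p hp <;> simp only [Finset.mem_coe, Finset.mem_filter] at hp ⊢ <;>
      simp_all [Equiv.Perm.mul_apply]
  -- the two conditions differ only at the ascent `(i, i + 1)` of `w`
  have hsplit : {p ∈ Finset.range n ×ˢ Finset.range n | p.1 < p.2 ∧ w p.1 < w p.2} =
      insert (i, i + 1)
        {p ∈ Finset.range n ×ˢ Finset.range n | s p.1 < s p.2 ∧ w p.1 < w p.2} := by
    ext ⟨a, b⟩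
    simp only [Finset.mem_filter, Finset.mem_insert, Finset.mem_product, Finset.mem_range,
      Prod.mk.injEq, s, sTr_apply]
    constructor
    · rintro ⟨⟨ha, hb⟩, hab, hw⟩
      by_cases h : a = i ∧ b = i + 1
      · exact Or.inl h
      · exact Or.inr ⟨⟨ha, hb⟩, by split_ifs <;> omega, hw⟩
    · rintro (⟨rfl, rfl⟩ | ⟨⟨ha, hb⟩, hab, hw⟩)
      · exact ⟨⟨by omega, hi⟩, by omega, hasc⟩
      · refine ⟨⟨ha, hb⟩, ?_, hw⟩
        split_ifs at hab <;> first | omega | (subst_vars; omega)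
  rw [nonInv, hsplit, Finset.card_insert_of_notMem, reindex]
  simp [s, sTr_apply]

lemma nonInv_mul_sTr_of_descent {n i : ℕ} {w : Equiv.Perm ℕ} (hi : i + 1 < n)
    (hd : w (i + 1) < w i) : nonInv n (w * sTr i) = nonInv n w + 1 := by
  simpa [mul_sTr_mul_sTr] using nonInv_eq_nonInv_mul_sTr_add_one (w := w * sTr i) hi
    (by rwa [mul_sTr_apply_left, mul_sTr_apply_right])

lemma nonInv_le_nonInv_mul_sTr_add_one {n i : ℕ} (σ : Equiv.Perm ℕ) (hi : i + 1 < n) :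
    nonInv n σ ≤ nonInv n (σ * sTr i) + 1 := by
  rcases lt_or_gt_of_ne (σ.injective.ne (show i ≠ i + 1 by omega)) with hasc | hdesc
  · exact (nonInv_eq_nonInv_mul_sTr_add_one hi hasc).le
  · rw [nonInv_mul_sTr_of_descent hi hdesc]
    omega

lemma nonInv_lt_nonInv_one {n : ℕ} {w : Equiv.Perm ℕ} (hw : InSn n w) (hne : w ≠ 1) :
    nonInv n w < nonInv n 1 := by
  obtain ⟨i, hi, hdesc⟩ := exists_descent_of_ne_one hw hne
  have := nonInv_mul_sTr_of_descent hi hdesc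
  have := nonInv_le_nonInv_one n (w * sTr i)
  omega

lemma X_sub_X_dvd_sub_rename_swap {R σ : Type*} [CommRing R] [DecidableEq σ] (i j : σ)
    (p : MvPolynomial σ R) : X i - X j ∣ p - rename (Equiv.swap i j) p := by
  induction p using MvPolynomial.induction_on with
  | C a => simp
  | add p q hp hq =>
    rw [map_add, add_sub_add_comm]
    exact dvd_add hp hq
  | mul_X p a hp =>
    rw [map_mul, rename_X,
      show p * X a - rename (Equiv.swap i j) p * X (Equiv.swap i j a) =
        (p - rename (Equiv.swap i j) p) * X a +
          rename (Equiv.swap i j) p * (X a - X (Equiv.swap i j a)) by ring]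
    refine dvd_add (dvd_mul_of_dvd_left hp _) (dvd_mul_of_dvd_right ?_ _)
    rw [Equiv.swap_apply_def]
    split_ifs with hai haj
    · rw [hai]
    · rw [haj, dvd_sub_comm]
    · rw [sub_self]
      exact dvd_zero _

lemma X_sub_X_dvd_demazure {R : Type*} [CommRing R] (b : R) (i : ℕ) (p : MvPolynomial ℕ R) :
    X i - X (i + 1) ∣
      (1 + C b * X (i + 1)) * p - (1 + C b * X i) * rename (Equiv.swap i (i + 1)) p := by
  set s := Equiv.swap i (i + 1)
  have hss : rename s (rename s p) = p := by
    rw [rename_rename, show ⇑s ∘ ⇑s = id from funext (Equiv.swap_apply_self _ _), rename_id,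
      AlgHom.id_apply]
  -- the numerator is the sum of two antisymmetric parts
  have hsplit : (1 + C b * X (i + 1)) * p - (1 + C b * X i) * rename s p =
      (p - rename s p) - C b * (X i * rename s p - rename s (X i * rename s p)) := by
    rw [map_mul, rename_X, hss, Equiv.swap_apply_left]
    ring
  rw [hsplit]
  exact dvd_sub (X_sub_X_dvd_sub_rename_swap _ _ p)
    (dvd_mul_of_dvd_right (X_sub_X_dvd_sub_rename_swap _ _ _) _)

lemma X_sub_X_ne_zero {R σ : Type*} [CommRing R] [Nontrivial R] {i j : σ} (h : i ≠ j) :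
    (X i - X j : MvPolynomial σ R) ≠ 0 :=
  sub_ne_zero.mpr (X_injective.ne h)

lemma eval_map_eval {R σ : Type*} [CommRing R] (t : σ → R)
    (h : MvPolynomial σ (MvPolynomial σ R)) : eval t (map (eval t) h) = eval t (eval X h) := by
  induction h using MvPolynomial.induction_on <;> simp_all

section Vanishing

variable {K : Type*} [Field K] {β : K} {G : (ℕ → K) → Equiv.Perm ℕ → MvPolynomial ℕ K}
  {t : ℕ → K}

lemma GrothFamily.G_one (hG : GrothFamily β G) (ht : ∀ j, 1 + β * t j ≠ 0) : G t 1 = 1 := by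
  have h0 : revPerm 0 = 1 := Equiv.ext fun j => by simp [revPerm_apply]
  simpa [h0] using (hG t ht).1 0

/-! A *lift* of `G t w` is a polynomial `h` in `x` whose coefficients are polynomials in a
generic second alphabet, specializing to `G t w` at `t`; `eval (X ∘ σ) h` is then the
evaluation of `𝔊_w(x, t)` at `x = t_σ` for generic `t`. -/

lemma GrothFamily.exists_lift_revPerm (hG : GrothFamily β G) (ht : ∀ j, 1 + β * t j ≠ 0)
    (n : ℕ) : ∃ h : MvPolynomial ℕ (MvPolynomial ℕ K), map (eval t) h = G t (revPerm n) ∧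
      ∀ σ : Equiv.Perm ℕ, InSn n σ → σ ≠ revPerm n → eval (fun a => X (σ a)) h = 0 := by
  refine ⟨∏ i ∈ Finset.range n, ∏ j ∈ Finset.range (n - 1 - i),
    C (C (1 + β * t j)⁻¹) * (X i - C (X j)), ?_, fun σ hσ hne => ?_⟩
  · simp [(hG t ht).1 n]
  obtain ⟨i, hi, hσi⟩ : ∃ i < n, σ i < n - 1 - i := by
    by_contra! h
    exact hne (eq_revPerm_of_forall_le hσ h)
  simp only [map_prod]
  refine Finset.prod_eq_zero (Finset.mem_range.mpr hi) <|
    Finset.prod_eq_zero (Finset.mem_range.mpr hσi) ?_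
  simp

lemma GrothFamily.exists_lift_mul_sTr (hG : GrothFamily β G) (ht : ∀ j, 1 + β * t j ≠ 0)
    {v : Equiv.Perm ℕ} {i : ℕ} (hd : v (i + 1) < v i) {h : MvPolynomial ℕ (MvPolynomial ℕ K)}
    (hh : map (eval t) h = G t v) :
    ∃ h' : MvPolynomial ℕ (MvPolynomial ℕ K), map (eval t) h' = G t (v * sTr i) ∧
      ∀ σ : Equiv.Perm ℕ, eval (fun a => X (σ a)) h = 0 →
        eval (fun a => X ((σ * sTr i) a)) h = 0 → eval (fun a => X (σ a)) h' = 0 := by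
  obtain ⟨h', hq⟩ := X_sub_X_dvd_demazure (C β) i h
  refine ⟨h', mul_left_cancel₀ (X_sub_X_ne_zero (R := K) (i.lt_succ_self.ne)) ?_,
    fun σ hσ hσs => ?_⟩
  · rw [(hG t ht).2 v i hd, ← hh, ← map_X (eval t) i, ← map_X (eval t) (i + 1), ← map_sub,
      ← map_mul, ← hq]
    simp [map_rename]
  · have := congrArg (eval fun a => X (σ a)) hq
    have hσs' : eval ((fun a => X (σ a)) ∘ ⇑(Equiv.swap i (i + 1))) h = 0 := hσs
    simp only [map_sub, map_mul, map_add, map_one, eval_X, eval_C, eval_rename, hσ, hσs',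
      mul_zero, sub_zero] at this
    exact (mul_eq_zero.mp this.symm).resolve_left
      (X_sub_X_ne_zero (σ.injective.ne i.lt_succ_self.ne))

lemma GrothFamily.exists_lift (hG : GrothFamily β G) (ht : ∀ j, 1 + β * t j ≠ 0) (n : ℕ)
    (w : Equiv.Perm ℕ) (hw : InSn n w) :
    ∃ h : MvPolynomial ℕ (MvPolynomial ℕ K), map (eval t) h = G t w ∧
      ∀ σ : Equiv.Perm ℕ, InSn n σ → nonInv n w < nonInv n σ →
        eval (fun a => X (σ a)) h = 0 := by
  induction hm : nonInv n w using Nat.strong_induction_on generalizing w with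
  | _ m ih =>
  by_cases hrev : w = revPerm n
  · subst hrev
    obtain ⟨h, hh, hvan⟩ := hG.exists_lift_revPerm ht n
    refine ⟨h, hh, fun σ hσ hlt => hvan σ hσ ?_⟩
    rintro rfl
    omega
  obtain ⟨i, hi, hasc⟩ := exists_ascent_of_ne_revPerm hw hrev
  have hnon := nonInv_eq_nonInv_mul_sTr_add_one hi hasc
  obtain ⟨h, hh, hvan⟩ := ih _ (by omega) (w * sTr i) (hw.mul_sTr hi) rfl
  obtain ⟨h', hh', hvan'⟩ :=
    hG.exists_lift_mul_sTr ht (v := w * sTr i)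
      (by rwa [mul_sTr_apply_left, mul_sTr_apply_right]) hh
  rw [mul_sTr_mul_sTr] at hh'
  refine ⟨h', hh', fun σ hσ hlt => hvan' σ (hvan σ hσ (by omega)) (hvan _ (hσ.mul_sTr hi) ?_)⟩
  have := nonInv_le_nonInv_mul_sTr_add_one σ hi
  omega

lemma GrothFamily.eval_self_eq_zero (hG : GrothFamily β G) (ht : ∀ j, 1 + β * t j ≠ 0)
    {n : ℕ} {w : Equiv.Perm ℕ} (hw : InSn n w) (hne : w ≠ 1) : eval t (G t w) = 0 := by
  obtain ⟨h, hh, hvan⟩ := hG.exists_lift ht n w hw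
  have h1 := hvan 1 (fun _ _ => rfl) (nonInv_lt_nonInv_one hw hne)
  rw [← hh, eval_map_eval]
  simpa using congrArg (eval t) h1

end Vanishing

section Diagram

variable {K : Type*} [Field K]

def ominusPoly (β : K) (y : ℕ → K) (i j : ℕ) : MvPolynomial ℕ K :=
  C (1 + β * y j)⁻¹ * (X i - C (y j))

def shapePoly (β : K) (y : ℕ → K) (n : ℕ) (s : ℕ → ℕ) : MvPolynomial ℕ K :=
  ∏ i ∈ Finset.range n, ∏ j ∈ Finset.range (s i), ominusPoly β y i j

lemma eval_ominusPoly (β : K) (t y : ℕ → K) (i j : ℕ) :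
    eval t (ominusPoly β y i j) = ominus β (t i) (y j) := by
  simp [ominusPoly, ominus, div_eq_inv_mul]

lemma rename_ominusPoly (β : K) (y : ℕ → K) (f : ℕ → ℕ) (i j : ℕ) :
    rename f (ominusPoly β y i j) = ominusPoly β y (f i) j := by
  simp [ominusPoly]

lemma demazure_ominusPoly {β : K} {y : ℕ → K} {j : ℕ} (hy : 1 + β * y j ≠ 0) (i : ℕ) :
    (1 + C β * X (i + 1)) * ominusPoly β y i j - (1 + C β * X i) * ominusPoly β y (i + 1) j =
      X i - X (i + 1) := by
  have hunit : C (1 + β * y j)⁻¹ * C (1 + β * y j) = (1 : MvPolynomial ℕ K) := by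
    rw [← C_mul, inv_mul_cancel₀ hy, C_1]
  simp only [ominusPoly, C_add, C_mul, C_1] at hunit ⊢
  linear_combination (X i - X (i + 1)) * hunit

lemma shapePoly_congr (β : K) (y : ℕ → K) {n : ℕ} {s s' : ℕ → ℕ} (h : ∀ i < n, s i = s' i) :
    shapePoly β y n s = shapePoly β y n s' :=
  Finset.prod_congr rfl fun i hi => by rw [h i (Finset.mem_range.mp hi)]

lemma rename_swap_shapePoly (β : K) (y : ℕ → K) {n i : ℕ} (hi : i + 1 < n) {s : ℕ → ℕ}
    (hs : s i = s (i + 1)) :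
    rename (Equiv.swap i (i + 1)) (shapePoly β y n s) = shapePoly β y n s := by
  have hlt : ∀ a, Equiv.swap i (i + 1) a < n ↔ a < n := fun a => by
    rw [Equiv.swap_apply_def]
    split_ifs <;> omega
  have hrow : ∀ a, s (Equiv.swap i (i + 1) a) = s a := fun a => by
    rw [Equiv.swap_apply_def]
    split_ifs with h1 h2
    · rw [h1, hs]
    · rw [h2, hs]
    · rfl
  rw [shapePoly, map_prod]
  refine Finset.prod_nbij' (Equiv.swap i (i + 1)) (Equiv.swap i (i + 1)) ?_ ?_ ?_ ?_ ?_
  · intro a ha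
    simpa [hlt] using ha
  · intro a ha
    simpa [hlt] using ha
  · intro a _
    exact Equiv.swap_apply_self _ _ a
  · intro a _
    exact Equiv.swap_apply_self _ _ a
  · intro a _
    simp only [map_prod, rename_ominusPoly, hrow]

lemma shapePoly_eq_mul_ominusPoly (β : K) (y : ℕ → K) {n i : ℕ} (hi : i < n) {s s' : ℕ → ℕ}
    (hsi : s i = s' i + 1) (hother : ∀ j ≠ i, s j = s' j) :
    shapePoly β y n s = shapePoly β y n s' * ominusPoly β y i (s' i) := by
  have hmem : i ∈ Finset.range n := Finset.mem_range.mpr hi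
  have hrest : ∏ a ∈ (Finset.range n).erase i, ∏ j ∈ Finset.range (s a), ominusPoly β y a j =
      ∏ a ∈ (Finset.range n).erase i, ∏ j ∈ Finset.range (s' a), ominusPoly β y a j :=
    Finset.prod_congr rfl fun a ha => by rw [hother a (Finset.ne_of_mem_erase ha)]
  rw [shapePoly, shapePoly, ← Finset.mul_prod_erase _ _ hmem, ← Finset.mul_prod_erase _ _ hmem,
    hsi, Finset.prod_range_succ, hrest]
  ring

end Diagram

/-! The dominant permutations interpolating between `revPerm n` (`M = n - k`) and `u₀`
(`M = 0`): one-line notation `n-1, …, n-k, M-1, …, 0, M, M+1, …, n-k-1`, with diagram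
`n-1, …, n-k, M-1, …, 1, 0, …`. -/

def domFn (n k M j : ℕ) : ℕ :=
  if j < k then n - 1 - j else if j < k + M then k + M - 1 - j else if j < n then j - k else j

def domShape (n k M i : ℕ) : ℕ :=
  if i < k then n - 1 - i else if i < k + M then k + M - 1 - i else 0

/-! The bubble sort passage from `M + 1` to `M`: after `r` steps the entry `M` has moved from
position `k` to position `k + r`, and rows `k, …, k + r - 1` of the diagram have lost a box. -/

def sweepFn (n k M r j : ℕ) : ℕ :=
  if j < k then n - 1 - j else if j < k + r then k + M - 1 - j else if j = k + r then M
  else if j ≤ k + M then k + M - j else if j < n then j - k else j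

def sweepShape (n k M r i : ℕ) : ℕ :=
  if i < k then n - 1 - i else if i < k + r then k + M - 1 - i else if i ≤ k + M then k + M - i
  else 0

section Dominant

variable {K : Type*} [Field K] {β : K} {G : (ℕ → K) → Equiv.Perm ℕ → MvPolynomial ℕ K}
  {y : ℕ → K}

lemma GrothFamily.G_mul_sTr_of_shapePoly (hG : GrothFamily β G) (hy : ∀ j, 1 + β * y j ≠ 0)
    {n i : ℕ} (hi : i + 1 < n) {w : Equiv.Perm ℕ} (hd : w (i + 1) < w i) {s s' : ℕ → ℕ}
    (hw : G y w = shapePoly β y n s) (hs' : s' i = s' (i + 1)) (hsi : s i = s' i + 1)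
    (hother : ∀ j ≠ i, s j = s' j) : G y (w * sTr i) = shapePoly β y n s' := by
  refine mul_left_cancel₀ (X_sub_X_ne_zero (R := K) i.lt_succ_self.ne) ?_
  rw [(hG y hy).2 w i hd, hw, shapePoly_eq_mul_ominusPoly β y (by omega) hsi hother, map_mul,
    rename_swap_shapePoly β y hi hs', rename_ominusPoly, Equiv.swap_apply_left]
  linear_combination shapePoly β y n s' * demazure_ominusPoly (hy (s' i)) i

lemma GrothFamily.G_sweep (hG : GrothFamily β G) (hy : ∀ j, 1 + β * y j ≠ 0) {n k M : ℕ}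
    (hkM : k + M < n)
    (h₀ : ∀ U : Equiv.Perm ℕ, (∀ j, U j = sweepFn n k M 0 j) →
      G y U = shapePoly β y n (sweepShape n k M 0)) :
    ∀ r ≤ M, ∀ U : Equiv.Perm ℕ, (∀ j, U j = sweepFn n k M r j) →
      G y U = shapePoly β y n (sweepShape n k M r) := by
  intro r
  induction r with
  | zero => exact fun _ => h₀
  | succ r ih =>
    intro hr U hU
    have hprev : ∀ j, (U * sTr (k + r)) j = sweepFn n k M r j := fun j => by
      rw [Equiv.Perm.mul_apply, sTr_apply]
      split_ifs <;> simp only [hU, sweepFn] <;> split_ifs <;> omega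
    rw [← mul_sTr_mul_sTr U (k + r)]
    refine hG.G_mul_sTr_of_shapePoly hy (by omega) ?_ (ih (by omega) _ hprev) ?_ ?_ ?_
    · simp only [hprev, sweepFn]
      split_ifs <;> omega
    · simp only [sweepShape]
      split_ifs <;> omega
    · simp only [sweepShape]
      split_ifs <;> omega
    · intro j hj
      simp only [sweepShape]
      split_ifs <;> omega

lemma GrothFamily.G_dom (hG : GrothFamily β G) (hy : ∀ j, 1 + β * y j ≠ 0) {n k : ℕ}
    (hk : k ≤ n) :
    ∀ M ≤ n - k, ∀ U : Equiv.Perm ℕ, (∀ j, U j = domFn n k M j) →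
      G y U = shapePoly β y n (domShape n k M) := by
  intro M hM
  induction h : n - k - M generalizing M with
  | zero =>
    intro U hU
    obtain rfl : U = revPerm n := Equiv.ext fun j => by
      rw [hU, revPerm_apply, domFn]
      split_ifs <;> omega
    rw [(hG y hy).1 n]
    exact shapePoly_congr β y fun i hi => by simp only [domShape]; split_ifs <;> omega
  | succ d ih =>
    have hprev := ih (M + 1) (by omega) (by omega)
    have hsweep := hG.G_sweep hy (n := n) (k := k) (M := M) (by omega) fun U hU => by
      rw [hprev U fun j => by rw [hU, sweepFn, domFn]; split_ifs <;> omega]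
      exact shapePoly_congr β y fun i _ => by simp only [sweepShape, domShape]; split_ifs <;> omega
    intro U hU
    rw [hsweep M le_rfl U fun j => by rw [hU, sweepFn, domFn]; split_ifs <;> omega]
    exact shapePoly_congr β y fun i _ => by simp only [sweepShape, domShape]; split_ifs <;> omega

lemma GrothFamily.G_u₀_eq_prod (hG : GrothFamily β G) (hy : ∀ j, 1 + β * y j ≠ 0) {n k : ℕ}
    (hk : k ≤ n) {u₀ : Equiv.Perm ℕ}
    (hu₀ : ∀ j, u₀ j = if j < k then n - 1 - j else if j < n then j - k else j) :
    G y u₀ = ∏ i ∈ Finset.range k, ∏ j ∈ Finset.range (n - 1 - i), ominusPoly β y i j := by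
  rw [hG.G_dom hy hk 0 (Nat.zero_le _) u₀ fun j => by rw [hu₀, domFn]; split_ifs <;> omega,
    shapePoly, ← Finset.prod_subset (Finset.range_subset_range.mpr hk) fun i _ hi => by
      rw [Finset.mem_range] at hi
      rw [domShape, if_neg hi, if_neg (by omega), Finset.prod_range_zero]]
  exact Finset.prod_congr rfl fun i hi => by
    rw [domShape, if_pos (Finset.mem_range.mp hi)]

end Dominant

lemma StructConsts.apply_one {K : Type*} [Field K] {β : K}
    {G : (ℕ → K) → Equiv.Perm ℕ → MvPolynomial ℕ K}
    {c : (ℕ → K) → (ℕ → K) → Equiv.Perm ℕ → Equiv.Perm ℕ → Equiv.Perm ℕ → K}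
    (hG : GrothFamily β G) (hc : StructConsts β G c) {t y : ℕ → K}
    (ht : ∀ j, 1 + β * t j ≠ 0) (hy : ∀ j, 1 + β * y j ≠ 0) {u v : Equiv.Perm ℕ}
    (hu : FinPerm u) (hv : FinPerm v) :
    c t y u v 1 = eval t (G y u) * eval t (G t v) := by
  obtain ⟨hfin, hnfin, hsum⟩ := hc t y ht hy u v hu hv
  have hsupp : (Function.support fun w => C (c t y u v w) * G t w).Finite :=
    hfin.subset fun w hw h0 => hw (by simp [h0])
  have hterm : ∀ w ≠ 1, eval t (C (c t y u v w) * G t w) = 0 := fun w hw1 => by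
    by_cases hw : FinPerm w
    · obtain ⟨N, hN⟩ := hw
      rw [map_mul, hG.eval_self_eq_zero ht (n := N) hN hw1, mul_zero]
    · rw [hnfin w hw, map_zero, zero_mul, map_zero]
  rw [← map_mul, hsum, map_finsum (eval t) hsupp, finsum_eq_single _ 1 hterm, hG.G_one ht,
    mul_one, eval_C]

/-- Proposition `Prop:initial` of the paper.  Let `u₀ ∈ S_n` be
given by `u₀(i) = n+1-i` for `i ≤ k` and `u₀(i) = i-k` for `k < i ≤ n` (1-based;
below in 0-based form).  Then for every `v ∈ S_n`,
`c_{u₀,v}^{id}(t,y) = ∏_{i=1}^{k} ∏_{j=1}^{n-i} (t_i ⊖ y_j)` if `v = id`, and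
`c_{u₀,v}^{id}(t,y) = 0` otherwise. -/
theorem initial_structure_constant
    {K : Type*} [Field K] (β : K)
    (G : (ℕ → K) → Equiv.Perm ℕ → MvPolynomial ℕ K)
    (c : (ℕ → K) → (ℕ → K) → Equiv.Perm ℕ → Equiv.Perm ℕ → Equiv.Perm ℕ → K)
    (hG : GrothFamily β G) (hc : StructConsts β G c)
    (n k : ℕ) (hk : k ≤ n)
    (u₀ : Equiv.Perm ℕ)
    (hu₀ : ∀ j, u₀ j = if j < k then n - 1 - j else if j < n then j - k else j)
    (v : Equiv.Perm ℕ) (hv : InSn n v)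
    (t y : ℕ → K)
    (ht : ∀ j, 1 + β * t j ≠ 0) (hy : ∀ j, 1 + β * y j ≠ 0) :
    (v = 1 → c t y u₀ v 1 =
      ∏ i ∈ Finset.range k, ∏ j ∈ Finset.range (n - 1 - i), ominus β (t i) (y j)) ∧
    (v ≠ 1 → c t y u₀ v 1 = 0) := by
  have hu₀n : InSn n u₀ := fun j hj => by rw [hu₀]; split_ifs <;> omega
  rw [hc.apply_one hG ht hy ⟨n, hu₀n⟩ ⟨n, hv⟩, hG.G_u₀_eq_prod hy hk hu₀]
  refine ⟨?_, fun hv1 => by rw [hG.eval_self_eq_zero ht hv hv1, mul_zero]⟩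
  rintro rfl
  simp [hG.G_one ht, map_prod, eval_ominusPoly]
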